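/- arXiv:1106.5150 — 9 statements merged into one kernel-verified Lean document; each statement's English description precedes it below -/
import Mathlib

section
/- Let N ≥ 2 and let D = (d_0, d_1, …, d_{N−1}) be a non-increasing sequence of nonnegative integers with 1 ≤ d_0 ≤ N−1. Then D is graphical if and only if the sequence D' = (d_1 − 1, d_2 − 1, …, d_{d_0} − 1, d_{d_0 + 1}, …, d_{N−1}) of length N−1, obtained by removing d_0 and subtracting 1 from each of the next d_0 entries, is graphical (as a multiset of N−1 nonnegative integers, i.e., after rearrangement into non-increasing order; in particular D is not graphical if any entry of D' is negative). -/
/-!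
Removing the vertex `0` from a realization `G` of `d` leaves a realization of `D'` exactly when
the neighbours of `0` are the `d 0` vertices following it; conversely a realization of `D'`
gets a new vertex `0` joined to those vertices. So the theorem reduces to: if `d` is graphical,
some realization has `N(0) = {1, …, d 0}`. While `N(0)` differs from this set, pick `j ∈ N(0)`
outside it and `i` inside it with `i ∉ N(0)`; as `d j ≤ d i`, some neighbour `k` of `i` is not a
neighbour of `j`, and the 2-switch replacing the edges `0j, ik` by `0i, jk` keeps all degrees
while bringing `N(0)` one vertex closer to the target.
-/

open Finset

lemma Fintype.exists_equiv_of_map_univ_eq {α β γ : Type*} [Fintype α] [Fintype β]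
    [DecidableEq γ] {f : α → γ} {g : β → γ} (h : univ.val.map f = univ.val.map g) :
    ∃ e : α ≃ β, ∀ a, g (e a) = f a := by
  have hfiber (c : γ) : Fintype.card {a // f a = c} = Fintype.card {b // g b = c} := by
    simpa [Multiset.count_map, Fintype.card_subtype, eq_comm, ← filter_val] using
      congrArg (Multiset.count c) h
  exact ⟨Equiv.ofFiberEquiv fun c => Fintype.equivOfCardEq (hfiber c), Equiv.ofFiberEquiv_map _⟩

namespace SimpleGraph

section Switch

variable {V : Type*} (G : SimpleGraph V)

def switch (a b c e : V) : SimpleGraph V :=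
  G.deleteEdges {s(a, b), s(c, e)} ⊔ fromEdgeSet {s(a, c), s(b, e)}

variable {G} {a b c e : V}

lemma switch_swap_pairs : G.switch b a e c = G.switch a b c e := by
  rw [switch, switch, Sym2.eq_swap (a := b), Sym2.eq_swap (a := e), Set.pair_comm s(b, e)]

lemma switch_swap_edges : G.switch c e a b = G.switch a b c e := by
  rw [switch, switch, Set.pair_comm s(c, e), Sym2.eq_swap (a := c) (b := a),
    Sym2.eq_swap (a := e) (b := b)]

lemma switch_adj_left (hab : G.Adj a b) (hce : G.Adj c e) (hac : ¬G.Adj a c) (hac' : a ≠ c)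
    (y : V) : (G.switch a b c e).Adj a y ↔ y = c ∨ y ≠ b ∧ G.Adj a y := by
  have hae : a ≠ e := by rintro rfl; exact hac hce.symm
  have hab' := hab.ne
  simp only [switch, sup_adj, deleteEdges_adj, fromEdgeSet_adj, Set.mem_insert_iff,
    Set.mem_singleton_iff, Sym2.eq_iff]
  grind

lemma switch_adj_of_ne {x : V} (hxa : x ≠ a) (hxb : x ≠ b) (hxc : x ≠ c) (hxe : x ≠ e)
    (y : V) : (G.switch a b c e).Adj x y ↔ G.Adj x y := by
  simp only [switch, sup_adj, deleteEdges_adj, fromEdgeSet_adj, Set.mem_insert_iff,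
    Set.mem_singleton_iff, Sym2.eq_iff]
  grind

variable [Fintype V] [DecidableEq V]

lemma degree_eq_of_adj_iff_exchange {G' : SimpleGraph V} [DecidableRel G.Adj]
    [DecidableRel G'.Adj] (hab : G.Adj a b) (hac : ¬G.Adj a c)
    (h : ∀ y, G'.Adj a y ↔ y = c ∨ y ≠ b ∧ G.Adj a y) : G'.degree a = G.degree a := by
  have hN : G'.neighborFinset a = insert c ((G.neighborFinset a).erase b) := by
    ext y
    simp only [mem_neighborFinset, h, mem_insert, mem_erase]
  rw [← card_neighborFinset_eq_degree, hN, card_insert_of_notMem (by simp [hac]),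
    card_erase_add_one (by simpa using hab), card_neighborFinset_eq_degree]

lemma degree_switch [DecidableRel G.Adj] [DecidableRel (G.switch a b c e).Adj]
    (hab : G.Adj a b) (hce : G.Adj c e) (hac : ¬G.Adj a c) (hbe : ¬G.Adj b e)
    (hac' : a ≠ c) (hbe' : b ≠ e) (x : V) : (G.switch a b c e).degree x = G.degree x := by
  by_cases hxa : x = a
  · subst hxa
    exact degree_eq_of_adj_iff_exchange hab hac (switch_adj_left hab hce hac hac')
  by_cases hxb : x = b
  · subst hxb
    exact degree_eq_of_adj_iff_exchange hab.symm hbe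
      (switch_swap_pairs ▸ switch_adj_left hab.symm hce.symm hbe hbe')
  by_cases hxc : x = c
  · subst hxc
    exact degree_eq_of_adj_iff_exchange hce (fun h => hac h.symm)
      (switch_swap_edges ▸ switch_adj_left hce hab (fun h => hac h.symm) (Ne.symm hac'))
  by_cases hxe : x = e
  · subst hxe
    exact degree_eq_of_adj_iff_exchange hce.symm (fun h => hbe h.symm)
      (switch_swap_pairs ▸ switch_swap_edges ▸
        switch_adj_left hce.symm hab.symm (fun h => hbe h.symm) (Ne.symm hbe'))
  simp only [← card_neighborFinset_eq_degree]
  congr 1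
  ext y
  simp only [mem_neighborFinset, switch_adj_of_ne hxa hxb hxc hxe]

lemma exists_adj_not_adj_of_degree_le [DecidableRel G.Adj] {v i j : V} (hvj : G.Adj v j)
    (hvi : ¬G.Adj v i) (hiv : i ≠ v) (hdeg : G.degree j ≤ G.degree i) :
    ∃ k, G.Adj i k ∧ k ≠ j ∧ ¬G.Adj j k := by
  by_contra! h
  -- otherwise `N(i) \ {j} ⊊ N(j) \ {i}`, the vertex `v` witnessing strictness
  have hssub : (G.neighborFinset i).erase j ⊂ (G.neighborFinset j).erase i := by
    refine (ssubset_iff_of_subset fun k hk => ?_).2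
      ⟨v, by simpa [hiv.symm] using hvj.symm, by simp [hvi, G.adj_comm]⟩
    obtain ⟨hkj, hik⟩ := by simpa using hk
    simpa [hik.ne'] using h k hik hkj
  have := card_lt_card hssub
  simp only [card_erase_eq_ite, mem_neighborFinset, G.adj_comm j i,
    card_neighborFinset_eq_degree] at this
  split_ifs at this <;> omega

variable {d : V → ℕ} {v : V} {T : Finset V}

lemma exists_switch_card_sdiff_lt [DecidableRel G.Adj] (hG : ∀ x, G.degree x = d x)
    (hvT : v ∉ T) (hcard : #T = d v) (hdom : ∀ i ∈ T, ∀ j ∉ T, j ≠ v → d j ≤ d i)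
    (hne : G.neighborFinset v ≠ T) :
    ∃ (G' : SimpleGraph V) (_ : DecidableRel G'.Adj), (∀ x, G'.degree x = d x) ∧
      #(G'.neighborFinset v \ T) < #(G.neighborFinset v \ T) := by
  have hcard' : #(G.neighborFinset v) = #T := by rw [card_neighborFinset_eq_degree, hG, hcard]
  obtain ⟨j, hjN, hjT⟩ := not_subset.1 fun h => hne (eq_of_subset_of_card_le h hcard'.ge)
  obtain ⟨i, hiT, hiN⟩ := not_subset.1 fun h => hne (eq_of_subset_of_card_le h hcard'.le).symm
  rw [mem_neighborFinset] at hjN hiN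
  have hiv : i ≠ v := by rintro rfl; exact hvT hiT
  obtain ⟨k, hik, hkj, hjk⟩ := exists_adj_not_adj_of_degree_le hjN hiN hiv
    (by rw [hG, hG]; exact hdom i hiT j hjT hjN.ne')
  classical
  refine ⟨G.switch v j i k, inferInstance, fun x => ?_, ?_⟩
  · rw [degree_switch hjN hik hiN hjk hiv.symm hkj.symm, hG]
  · have hN : (G.switch v j i k).neighborFinset v = insert i ((G.neighborFinset v).erase j) := by
      ext y
      simp only [mem_neighborFinset, switch_adj_left hjN hik hiN hiv.symm, mem_insert, mem_erase]
    rw [hN, insert_sdiff_of_mem _ hiT, erase_sdiff_comm]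
    exact card_erase_lt_of_mem (mem_sdiff.2 ⟨by simpa using hjN, hjT⟩)

theorem exists_degree_eq_neighborFinset_eq [DecidableRel G.Adj] (hG : ∀ x, G.degree x = d x)
    (hvT : v ∉ T) (hcard : #T = d v) (hdom : ∀ i ∈ T, ∀ j ∉ T, j ≠ v → d j ≤ d i) :
    ∃ (G' : SimpleGraph V) (_ : DecidableRel G'.Adj), (∀ x, G'.degree x = d x) ∧
      G'.neighborFinset v = T := by
  induction h : #(G.neighborFinset v \ T) using Nat.strong_induction_on generalizing G with
  | _ n ih =>
    by_cases hN : G.neighborFinset v = T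
    · exact ⟨G, _, hG, hN⟩
    obtain ⟨G', _, hG', hlt⟩ := exists_switch_card_sdiff_lt hG hvT hcard hdom hN
    exact ih _ (h ▸ hlt) hG' rfl

end Switch

section Apex

variable {m : ℕ}

lemma degree_zero_eq_card_filter (G : SimpleGraph (Fin (m + 1))) [DecidableRel G.Adj] :
    G.degree 0 = #{i : Fin m | G.Adj 0 i.succ} := by
  rw [← Nat.cast_id (G.degree 0), degree_eq_sum_if_adj, Fin.sum_univ_succ, if_neg (G.irrefl),
    zero_add, card_filter]

lemma degree_succ_eq_degree_comap_add (G : SimpleGraph (Fin (m + 1))) [DecidableRel G.Adj]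
    (i : Fin m) :
    G.degree i.succ = (G.comap Fin.succ).degree i + if G.Adj 0 i.succ then 1 else 0 := by
  rw [← Nat.cast_id (G.degree _), ← Nat.cast_id ((G.comap _).degree _), degree_eq_sum_if_adj,
    degree_eq_sum_if_adj, Fin.sum_univ_succ, add_comm]
  simp only [G.adj_comm i.succ 0, comap_adj]

def addApex (H : SimpleGraph (Fin m)) (T : Finset (Fin m)) : SimpleGraph (Fin (m + 1)) where
  Adj x y := Fin.cases (motive := fun _ => Prop)
    (Fin.cases (motive := fun _ => Prop) False (· ∈ T) y)
    (fun a => Fin.cases (motive := fun _ => Prop) (a ∈ T) (fun b => H.Adj a b) y) x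
  symm := ⟨fun x y => by
    cases x using Fin.cases <;> cases y using Fin.cases <;> simp [H.adj_comm]⟩
  loopless := ⟨fun x => by cases x using Fin.cases <;> simp⟩

@[simp] lemma addApex_adj_zero_succ {H : SimpleGraph (Fin m)} {T : Finset (Fin m)} {i : Fin m} :
    (H.addApex T).Adj 0 i.succ ↔ i ∈ T := by
  simp [addApex]

theorem exists_degree_eq_adj_zero_iff (d : Fin (m + 1) → ℕ) (T : Finset (Fin m)) :
    (∃ (G : SimpleGraph (Fin (m + 1))) (_ : DecidableRel G.Adj),
        (∀ v, G.degree v = d v) ∧ ∀ i, G.Adj 0 i.succ ↔ i ∈ T) ↔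
      #T = d 0 ∧ ∃ (H : SimpleGraph (Fin m)) (_ : DecidableRel H.Adj),
        ∀ i, (H.degree i : ℤ) = d i.succ - if i ∈ T then 1 else 0 := by
  constructor
  · rintro ⟨G, _, hG, hT⟩
    refine ⟨?_, G.comap Fin.succ, inferInstance, fun i => ?_⟩
    · simp only [← hG, degree_zero_eq_card_filter, hT, filter_mem_eq_inter, univ_inter]
    · simp only [← hG, degree_succ_eq_degree_comap_add, hT]
      push_cast
      ring
  · rintro ⟨hT, H, _, hH⟩
    classical
    refine ⟨H.addApex T, inferInstance, fun v => ?_, fun i => addApex_adj_zero_succ⟩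
    cases v using Fin.cases with
    | zero => simp [degree_zero_eq_card_filter, hT]
    | succ i =>
      have hH' : ((H.addApex T).comap Fin.succ).degree i = H.degree i := by congr!
      have := hH i
      simp only [degree_succ_eq_degree_comap_add, hH', addApex_adj_zero_succ]
      split_ifs at this ⊢ <;> omega

end Apex

section Relabel

variable {α β : Type*} [Fintype α] [Fintype β]

lemma degree_comap_equiv (e : α ≃ β) (H : SimpleGraph β) [DecidableRel H.Adj] (a : α) :
    (H.comap e).degree a = H.degree (e a) := by
  rw [← (Iso.comap e H).degree_eq]
  rfl

lemma exists_map_univ_degree_eq_iff (f : α → ℤ) :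
    (∃ (n : ℕ) (H : SimpleGraph (Fin n)) (_ : DecidableRel H.Adj),
        univ.val.map f = univ.val.map fun v => (H.degree v : ℤ)) ↔
      ∃ (H : SimpleGraph α) (_ : DecidableRel H.Adj), ∀ a, (H.degree a : ℤ) = f a := by
  classical
  constructor
  · rintro ⟨n, H, _, h⟩
    obtain ⟨e, he⟩ := Fintype.exists_equiv_of_map_univ_eq h
    exact ⟨H.comap e, inferInstance, fun a => by rw [degree_comap_equiv, he]⟩
  · rintro ⟨H, _, hH⟩
    let e := (Fintype.equivFin α).symm
    refine ⟨_, H.comap e, inferInstance, ?_⟩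
    rw [← Multiset.map_univ_val_equiv e, Multiset.map_map]
    congr 1
    funext i
    rw [Function.comp_apply, degree_comap_equiv, hH]

end Relabel

end SimpleGraph

open SimpleGraph in
/-- **Havel–Hakimi theorem.**
Let `N ≥ 2` and `d` a non-increasing sequence of nonnegative integers with `1 ≤ d 0 ≤ N - 1`.
Then `d` is graphical iff the sequence `D'` of length `N - 1`, obtained by removing `d 0`
and subtracting `1` from each of the next `d 0` entries, is graphical as a multiset of
integers (in particular, `d` is not graphical if any entry of `D'` is negative, since
degrees of a simple graph are nonnegative). -/
theorem havel_hakimi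
    (N : ℕ) (hN : 2 ≤ N) (d : Fin N → ℕ)
    (hmono : Antitone d)
    (hd0bound : d ⟨0, by omega⟩ ≤ N - 1) :
    (∃ (G : SimpleGraph (Fin N)) (_ : DecidableRel G.Adj), ∀ i, G.degree i = d i)
      ↔ (∃ (n : ℕ) (G : SimpleGraph (Fin n)) (_ : DecidableRel G.Adj),
          Multiset.map
            (fun i : Fin N =>
              if i.val ≤ d ⟨0, by omega⟩ then (d i : ℤ) - 1 else (d i : ℤ))
            ((Finset.univ.filter (fun i : Fin N => i.val ≠ 0)).val)
          = Multiset.map (fun v : Fin n => (G.degree v : ℤ)) Finset.univ.val) := by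
  obtain ⟨m, rfl⟩ : ∃ m, N = m + 1 := ⟨N - 1, by omega⟩
  rw [Fin.zero_eta] at hd0bound ⊢
  set T : Finset (Fin m) := {i | (i : ℕ) < d 0}
  have hT : #T = d 0 := by rw [Fin.card_filter_val_lt]; omega
  have hfilter : ({i | i.val ≠ 0} : Finset (Fin (m + 1))) = univ.map (Fin.succEmb m) := by
    ext i
    cases i using Fin.cases <;> simp
  have hshift (i : Fin m) :
      (if i.succ.val ≤ d 0 then (d i.succ : ℤ) - 1 else (d i.succ : ℤ)) =
        d i.succ - if i ∈ T then 1 else 0 := by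
    simp only [Fin.val_succ, T, mem_filter_univ, Nat.lt_iff_add_one_le]
    split_ifs <;> ring
  rw [hfilter, map_val, Multiset.map_map, exists_map_univ_degree_eq_iff]
  simp only [Function.comp_apply, Fin.coe_succEmb, hshift]
  rw [← (exists_degree_eq_adj_zero_iff d T).trans (and_iff_right hT)]
  constructor
  · rintro ⟨G, _, hG⟩
    have hdom :
        ∀ i ∈ T.map (Fin.succEmb m), ∀ j ∉ T.map (Fin.succEmb m), j ≠ 0 → d j ≤ d i := by
      simp only [mem_map, Fin.coe_succEmb, T, mem_filter_univ]
      rintro _ ⟨a, ha, rfl⟩ j hj hj0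
      obtain ⟨b, rfl⟩ := Fin.exists_succ_eq.2 hj0
      exact hmono (Fin.succ_le_succ_iff.2 (Fin.le_def.2 (by grind)))
    obtain ⟨G', _, hG', hN0⟩ :=
      G.exists_degree_eq_neighborFinset_eq hG (by simp) (by simp [hT]) hdom
    exact ⟨G', _, hG', fun i => by rw [← mem_neighborFinset, hN0]; simp⟩
  · rintro ⟨G, _, hG, -⟩
    exact ⟨G, _, hG⟩
end

section
/- Fix a real γ > 2 and for each integer N ≥ 2 let x_N = [ (γ−1)·H_{N−1,γ}/N + (N−1)^{1−γ} ]^{1/(1−γ)}, which is the unique positive real solving (N/((1−γ)·H_{N−1,γ}))·[(N−1)^{1−γ} − x^{1−γ}] = 1. Then lim_{N→∞} x_N / N^{1/(γ−1)} = ((γ−1)·ζ(γ))^{−1/(γ−1)}, where ζ is the Riemann zeta function. In particular x_N grows sublinearly in N. -/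
/-!
Solving the defining equation for `x ^ (1 - γ)` gives `x_N = A_N ^ (1 / (1 - γ))` with
`A_N = (γ - 1) H_{N-1,γ} / N + (N - 1) ^ (1 - γ)`, hence
`x_N / N ^ (1 / (γ - 1)) = (N A_N) ^ (-1 / (γ - 1))`. Now
`N A_N = (γ - 1) H_{N-1,γ} + N (N - 1) ^ (1 - γ) → (γ - 1) ζ(γ)`: the `H_{N-1,γ}` are partial sums
of `ζ(γ)` and the correction is `O(N ^ (2 - γ))`. Sublinearity follows from `1 / (γ - 1) < 1`.
-/

open Filter

/-- The generalized harmonic number `H_{a,b} = ∑_{t=1}^{a} t^{-b}`. -/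
noncomputable def Hgen (a : ℕ) (b : ℝ) : ℝ := ∑ t ∈ Finset.Icc 1 a, (t : ℝ) ^ (-b)

/-- The continuum approximation to the expected maximum degree:
`x_N = [(γ-1)·H_{N-1,γ}/N + (N-1)^{1-γ}]^{1/(1-γ)}`. -/
noncomputable def xN (γ : ℝ) (N : ℕ) : ℝ :=
  ((γ - 1) * Hgen (N - 1) γ / N + ((N : ℝ) - 1) ^ (1 - γ)) ^ (1 / (1 - γ))

open Real

lemma hasSum_nat_rpow_neg_riemannZeta_re {s : ℝ} (hs : 1 < s) :
    HasSum (fun n : ℕ => (n : ℝ) ^ (-s)) (riemannZeta s).re := by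
  have hs' : 1 < (s : ℂ).re := by simpa using hs
  have hζ := zeta_eq_tsum_one_div_nat_cpow hs' ▸
    (Complex.summable_one_div_nat_cpow.mpr hs').hasSum
  convert Complex.hasSum_re hζ using 2 with n
  rw [← Complex.ofReal_natCast, ← Complex.ofReal_cpow n.cast_nonneg, ← Complex.ofReal_one,
    ← Complex.ofReal_div, Complex.ofReal_re, rpow_neg n.cast_nonneg, one_div]

lemma Hgen_eq_sum_range (a : ℕ) {b : ℝ} (hb : b ≠ 0) :
    Hgen a b = ∑ t ∈ Finset.range (a + 1), (t : ℝ) ^ (-b) := by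
  rw [Nat.range_succ_eq_Icc_zero, ← Finset.insert_Icc_add_one_left_eq_Icc a.zero_le,
    Finset.sum_insert (by simp), Nat.cast_zero, zero_rpow (neg_ne_zero.mpr hb), zero_add, zero_add, Hgen]

lemma tendsto_Hgen_riemannZeta_re {s : ℝ} (hs : 1 < s) :
    Tendsto (fun a => Hgen a s) atTop (nhds (riemannZeta s).re) := by
  have h := (tendsto_add_atTop_iff_nat 1).mpr
    (hasSum_nat_rpow_neg_riemannZeta_re hs).tendsto_sum_nat
  exact h.congr fun a => (Hgen_eq_sum_range a (by linarith)).symm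

lemma Hgen_pos {a : ℕ} (ha : 1 ≤ a) (b : ℝ) : 0 < Hgen a b :=
  Finset.sum_pos' (fun t _ => by positivity) ⟨1, Finset.mem_Icc.mpr ⟨le_rfl, ha⟩, by simp⟩

lemma Hgen_nonneg (a : ℕ) (b : ℝ) : 0 ≤ Hgen a b :=
  Finset.sum_nonneg fun t _ => by positivity

lemma xN_base_nonneg {γ : ℝ} (hγ : 1 ≤ γ) {N : ℕ} (hN : 1 ≤ N) :
    0 ≤ (γ - 1) * Hgen (N - 1) γ / N + ((N : ℝ) - 1) ^ (1 - γ) := by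
  have := Hgen_nonneg (N - 1) γ
  have : 0 ≤ γ - 1 := by linarith
  have : (1 : ℝ) ≤ N := by exact_mod_cast hN
  positivity

lemma tendsto_mul_sub_one_rpow_atTop {p : ℝ} (hp : p < -1) :
    Tendsto (fun x : ℝ => x * (x - 1) ^ p) atTop (nhds 0) := by
  have hsub : Tendsto (fun x : ℝ => x - 1) atTop atTop :=
    tendsto_atTop_add_const_right _ _ tendsto_id
  have h := ((tendsto_rpow_neg_atTop (y := -(p + 1)) (by linarith)).comp hsub).add
    ((tendsto_rpow_neg_atTop (y := -p) (by linarith)).comp hsub)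
  rw [add_zero] at h
  refine h.congr' ?_
  filter_upwards [eventually_gt_atTop 1] with x hx
  simp only [Function.comp, neg_neg]
  rw [rpow_add_one (by linarith : x - 1 ≠ 0)]
  ring

lemma continuum_max_degree_eq_one_iff_eq_xN {γ : ℝ} (hγ : 1 < γ) {N : ℕ} (hN : 2 ≤ N) {x : ℝ}
    (hx : 0 < x) :
    (N : ℝ) / ((1 - γ) * Hgen (N - 1) γ) * (((N : ℝ) - 1) ^ (1 - γ) - x ^ (1 - γ)) = 1 ↔
      x = xN γ N := by
  have hH : 0 < Hgen (N - 1) γ := Hgen_pos (by omega) γ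
  have hA := xN_base_nonneg hγ.le (N := N) (by omega)
  have hk : (1 - γ) * Hgen (N - 1) γ ≠ 0 := mul_ne_zero (by linarith) hH.ne'
  rw [xN, one_div, eq_rpow_inv hx.le hA (by linarith), div_mul_eq_mul_div, div_eq_one_iff_eq hk]
  constructor <;> intro h
  · field_simp; linarith
  · rw [h]; field_simp; ring

lemma xN_div_rpow_eq {γ : ℝ} (hγ : 1 ≤ γ) {N : ℕ} (hN : 1 ≤ N) :
    xN γ N / (N : ℝ) ^ (1 / (γ - 1)) =
      ((γ - 1) * Hgen (N - 1) γ + N * ((N : ℝ) - 1) ^ (1 - γ)) ^ (-(1 / (γ - 1))) := by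
  have hN0 : (0 : ℝ) < N := by positivity
  have hA := xN_base_nonneg hγ hN
  have hexp : 1 / (1 - γ) = -(1 / (γ - 1)) := by rw [← div_neg, neg_sub]
  rw [show (γ - 1) * Hgen (N - 1) γ + N * ((N : ℝ) - 1) ^ (1 - γ) =
      N * ((γ - 1) * Hgen (N - 1) γ / N + ((N : ℝ) - 1) ^ (1 - γ)) by field_simp,
    mul_rpow hN0.le hA, xN, hexp, rpow_neg hN0.le, div_eq_inv_mul]

lemma tendsto_xN_div_rpow {γ : ℝ} (hγ : 2 < γ) :
    Tendsto (fun N : ℕ => xN γ N / (N : ℝ) ^ (1 / (γ - 1))) atTop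
      (nhds (((γ - 1) * (riemannZeta γ).re) ^ (-(1 / (γ - 1))))) := by
  have hH := ((tendsto_Hgen_riemannZeta_re (by linarith : 1 < γ)).comp
    (tendsto_sub_atTop_nat 1)).const_mul (γ - 1)
  have htail := (tendsto_mul_sub_one_rpow_atTop (by linarith : 1 - γ < -1)).comp
    tendsto_natCast_atTop_atTop
  have hL : (γ - 1) * (riemannZeta γ).re ≠ 0 :=
    (mul_pos (by linarith) (riemannZeta_re_pos_of_one_lt (by linarith))).ne'
  have hbase : Tendsto (fun N : ℕ => (γ - 1) * Hgen (N - 1) γ + N * ((N : ℝ) - 1) ^ (1 - γ))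
      atTop (nhds ((γ - 1) * (riemannZeta γ).re)) := by
    simpa using hH.add htail
  refine (hbase.rpow_const (Or.inl hL)).congr' ?_
  filter_upwards [eventually_ge_atTop 1] with N hN
  exact (xN_div_rpow_eq (by linarith) hN).symm

lemma tendsto_xN_div_self {γ : ℝ} (hγ : 2 < γ) :
    Tendsto (fun N : ℕ => xN γ N / N) atTop (nhds 0) := by
  have hpow : Tendsto (fun N : ℕ => (N : ℝ) ^ (1 / (γ - 1) - 1)) atTop (nhds 0) := by
    have hneg : 1 / (γ - 1) - 1 < 0 := by
      rw [sub_neg, div_lt_one (by linarith)]; linarith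
    simpa [Function.comp_def] using
      (tendsto_rpow_neg_atTop (neg_pos.mpr hneg)).comp tendsto_natCast_atTop_atTop
  have h := (tendsto_xN_div_rpow hγ).mul hpow
  rw [mul_zero] at h
  refine h.congr' ?_
  filter_upwards [eventually_gt_atTop 0] with N hN
  have hN0 : (0 : ℝ) < N := by exact_mod_cast hN
  have hpos : (0 : ℝ) < (N : ℝ) ^ (1 / (γ - 1)) := rpow_pos_of_pos hN0 _
  rw [rpow_sub_one hN0.ne']
  field_simp

/-- For `γ > 2`, `x_N` is the unique positive real solving
`(N/((1-γ)·H_{N-1,γ}))·[(N-1)^{1-γ} - x^{1-γ}] = 1`, and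
`lim_{N→∞} x_N / N^{1/(γ-1)} = ((γ-1)·ζ(γ))^{-1/(γ-1)}`;
in particular `x_N` grows sublinearly in `N`. -/
theorem max_degree_scaling_gamma_gt_two (γ : ℝ) (hγ : 2 < γ) :
    (∀ N : ℕ, 2 ≤ N → ∀ x : ℝ, 0 < x →
      ((N : ℝ) / ((1 - γ) * Hgen (N - 1) γ) * (((N : ℝ) - 1) ^ (1 - γ) - x ^ (1 - γ)) = 1
        ↔ x = xN γ N)) ∧
    Tendsto (fun N : ℕ => xN γ N / (N : ℝ) ^ (1 / (γ - 1))) atTop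
      (nhds (((γ - 1) * (riemannZeta γ).re) ^ (-(1 / (γ - 1))))) ∧
    Tendsto (fun N : ℕ => xN γ N / N) atTop (nhds 0) :=
  ⟨fun _ hN _ hx => continuum_max_degree_eq_one_iff_eq_xN (by linarith) hN hx,
    tendsto_xN_div_rpow hγ, tendsto_xN_div_self hγ⟩
end

section
/- Fix a real γ > 1. For every integer N ≥ 2, the expected maximum degree satisfies d̂_N(γ) ≤ 1 + (N/(γ−1))^{1/(γ−1)}. -/
open Filter

/-- The expected maximum degree of a power-law degree sequence with exponent `γ` on
`N` nodes: `d̂_N(γ) = max { x ∈ {1,…,N-1} : N · ∑_{k=x}^{N-1} k^{-γ} ≥ H_{N-1,γ} }`. -/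
noncomputable def dhat (N : ℕ) (γ : ℝ) : ℕ :=
  sSup {x : ℕ | 1 ≤ x ∧ x ≤ N - 1 ∧
    Hgen (N - 1) γ ≤ (N : ℝ) * ∑ k ∈ Finset.Icc x (N - 1), (k : ℝ) ^ (-γ)}

/-!
If `x ≥ 2` lies in the set defining `d̂_N(γ)`, then `1 ≤ H_{N-1,γ} ≤ N ∑_{k ≥ x} k^{-γ}`, and
comparing the tail sum with `∫_{x-1}^∞ t^{-γ} dt = (x-1)^{1-γ}/(γ-1)` gives
`γ - 1 ≤ N (x-1)^{1-γ}`, i.e. `x - 1 ≤ (N/(γ-1))^{1/(γ-1)}`.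
-/

open Finset Real

lemma one_le_Hgen {m : ℕ} (hm : 1 ≤ m) (b : ℝ) : 1 ≤ Hgen m b := by
  have h := single_le_sum (f := fun t : ℕ => (t : ℝ) ^ (-b))
    (fun t _ => rpow_nonneg t.cast_nonneg _) (mem_Icc.mpr ⟨le_rfl, hm⟩)
  simpa [Hgen] using h

lemma integral_rpow_neg_le {γ a b : ℝ} (hγ : 1 < γ) (ha : 0 < a) (hb : 0 < b) :
    ∫ t in a..b, t ^ (-γ) ≤ a ^ (1 - γ) / (γ - 1) := by
  have h0 : (0 : ℝ) ∉ Set.uIcc a b := by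
    rw [Set.mem_uIcc]; rintro (⟨h, -⟩ | ⟨h, -⟩) <;> linarith
  rw [integral_rpow (Or.inr ⟨by linarith, h0⟩), neg_add_eq_sub, ← neg_sub, ← neg_sub γ,
    neg_div_neg_eq]
  exact div_le_div_of_nonneg_right (sub_le_self _ (rpow_nonneg hb.le _)) (by linarith)

lemma sum_Ioc_rpow_neg_le {γ : ℝ} (hγ : 1 < γ) {n : ℕ} (hn : 0 < n) (m : ℕ) :
    ∑ k ∈ Ioc n m, (k : ℝ) ^ (-γ) ≤ (n : ℝ) ^ (1 - γ) / (γ - 1) := by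
  have hn' : (0 : ℝ) < n := by exact_mod_cast hn
  rcases le_or_gt n m with hnm | hmn
  · have hanti : AntitoneOn (fun t : ℝ => t ^ (-γ)) (Set.Icc n m) := fun s hs t _ hst =>
      rpow_le_rpow_of_nonpos (hn'.trans_le hs.1) hst (by linarith)
    calc ∑ k ∈ Ioc n m, (k : ℝ) ^ (-γ) = ∑ i ∈ Ico n m, ((i + 1 : ℕ) : ℝ) ^ (-γ) := by
          rw [sum_Ico_add' (fun k : ℕ => (k : ℝ) ^ (-γ)), Ico_add_one_add_one_eq_Ioc]
      _ ≤ ∫ t in (n : ℝ)..m, t ^ (-γ) := hanti.sum_le_integral_Ico hnm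
      _ ≤ (n : ℝ) ^ (1 - γ) / (γ - 1) :=
          integral_rpow_neg_le hγ hn' (hn'.trans_le (by exact_mod_cast hnm))
  · rw [Ioc_eq_empty_of_le hmn.le, sum_empty]
    exact div_nonneg (rpow_nonneg hn'.le _) (by linarith)

lemma le_one_add_rpow_of_Hgen_le {γ : ℝ} (hγ : 1 < γ) {N x m : ℕ} (hx : 1 ≤ x) (hxm : x ≤ m)
    (h : Hgen m γ ≤ N * ∑ k ∈ Icc x m, (k : ℝ) ^ (-γ)) :
    (x : ℝ) ≤ 1 + ((N : ℝ) / (γ - 1)) ^ (1 / (γ - 1)) := by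
  obtain ⟨n, rfl⟩ : ∃ n, x = n + 1 := ⟨x - 1, by omega⟩
  push_cast
  rcases Nat.eq_zero_or_pos n with rfl | hn
  · simp only [Nat.cast_zero, zero_add, le_add_iff_nonneg_right]
    positivity
  have hn' : (0 : ℝ) < n := by exact_mod_cast hn
  have hγ' : 0 < γ - 1 := by linarith
  have htail : γ - 1 ≤ N * (n : ℝ) ^ (1 - γ) := by
    rw [Icc_add_one_left_eq_Ioc] at h
    have hsum := sum_Ioc_rpow_neg_le hγ hn m
    calc γ - 1 ≤ (γ - 1) * Hgen m γ := le_mul_of_one_le_right hγ'.le (one_le_Hgen (by omega) γ)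
      _ ≤ (γ - 1) * (N * ((n : ℝ) ^ (1 - γ) / (γ - 1))) := by
          gcongr; exact h.trans (mul_le_mul_of_nonneg_left hsum N.cast_nonneg)
      _ = N * (n : ℝ) ^ (1 - γ) := by field_simp
  have hpow : (n : ℝ) ^ (γ - 1) ≤ N / (γ - 1) := by
    rw [le_div_iff₀ hγ', ← le_div_iff₀' (rpow_pos_of_pos hn' _), div_eq_mul_inv,
      ← rpow_neg hn'.le, neg_sub]
    exact htail
  rw [one_div, add_comm]
  gcongr
  exact (le_rpow_inv_iff_of_pos hn'.le (by positivity) hγ').mpr hpow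

theorem expected_max_degree_bound_general (γ : ℝ) (hγ : 1 < γ) (N : ℕ) :
    (dhat N γ : ℝ) ≤ 1 + ((N : ℝ) / (γ - 1)) ^ (1 / (γ - 1)) := by
  -- In `ℕ`, `csSup_le'` needs no nonemptiness (`sSup ∅ = 0`), hence the detour through `⌊·⌋₊`.
  have hfloor : dhat N γ ≤ ⌊1 + ((N : ℝ) / (γ - 1)) ^ (1 / (γ - 1))⌋₊ :=
    csSup_le' fun x ⟨hx, hxN, h⟩ => Nat.le_floor (le_one_add_rpow_of_Hgen_le hγ hx hxN h)
  exact (Nat.cast_le.mpr hfloor).trans (Nat.floor_le (by positivity))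

/-- For `γ > 1` and every integer `N ≥ 2`, the expected maximum degree satisfies
`d̂_N(γ) ≤ 1 + (N/(γ-1))^{1/(γ-1)}`. -/
theorem expected_max_degree_bound (γ : ℝ) (hγ : 1 < γ) (N : ℕ) (hN : 2 ≤ N) :
    (dhat N γ : ℝ) ≤ 1 + ((N : ℝ) / (γ - 1)) ^ (1 / (γ - 1)) :=
  expected_max_degree_bound_general γ hγ N
end

section
/- Fix a real γ < 2. Then lim_{N→∞} d̂_N(γ) / N = 1, i.e., the expected maximum degree of a power-law degree sequence with exponent γ < 2 grows linearly, of the same order as the number of nodes N. -/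
open Filter

/-!
The bound `d̂_N ≤ N - 1` is built into the definition; the content is the lower bound.
Take `m = ⌊εN⌋` and `x = N - m`. Each of the `m` terms `k ^ (-γ)` with `x ≤ k ≤ N - 1`
is at least `2 ^ (-|γ|) (N - 1) ^ (-γ)`, since `k ≥ (N - 1) / 2`, so
`N · ∑_{k=x}^{N-1} k ^ (-γ) ≳ ε N² (N - 1) ^ (-γ)`. On the other side
`H_{n,γ} ≤ C n ^ a n ^ (-γ)` with `a < 2`: `a = 1` when `γ ≤ 0`, and `a = 1 + γ/2` when
`0 ≤ γ < 2`, by comparing `k ^ (-γ) ≤ k ^ (-γ/2)` and `∑_{k ≤ n} k ^ (s - 1) ≤ n ^ s / s`.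
As `a < 2`, `x` eventually lies in the defining set, so `d̂_N ≥ (1 - ε) N`.
-/

open Finset Real

theorem sub_one_rpow_add_mul_rpow_sub_one_le {s y : ℝ} (hs0 : 0 ≤ s) (hs1 : s ≤ 1)
    (hy : 1 ≤ y) : (y - 1) ^ s + s * y ^ (s - 1) ≤ y ^ s := by
  have hy0 : 0 < y := by linarith
  -- weighted AM-GM for `y - 1` and `y` with weights `s` and `1 - s`
  have amgm : (y - 1) ^ s * y ^ (1 - s) ≤ s * (y - 1) + (1 - s) * y :=
    geom_mean_le_arith_mean2_weighted hs0 (by linarith) (by linarith) hy0.le (by ring)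
  have hcancel : y ^ (1 - s) * y ^ (s - 1) = 1 := by
    rw [← rpow_add hy0]; simp
  have hy_mul : y * y ^ (s - 1) = y ^ s := by
    rw [mul_comm, ← rpow_add_one hy0.ne']; ring_nf
  have := mul_le_mul_of_nonneg_right amgm (rpow_nonneg hy0.le (s - 1))
  rw [mul_assoc, hcancel, mul_one] at this
  linarith

theorem mul_sum_Icc_rpow_sub_one_le {s : ℝ} (hs0 : 0 ≤ s) (hs1 : s ≤ 1) (n : ℕ) :
    s * ∑ k ∈ Icc 1 n, (k : ℝ) ^ (s - 1) ≤ (n : ℝ) ^ s := by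
  induction n with
  | zero => simpa using rpow_nonneg le_rfl s
  | succ n ih =>
    have step := sub_one_rpow_add_mul_rpow_sub_one_le hs0 hs1 (y := n + 1) (by simp)
    rw [add_sub_cancel_right] at step
    rw [sum_Icc_succ_top (by omega), mul_add]
    push_cast
    linarith

theorem Hgen_le_of_nonpos {γ : ℝ} (hγ : γ ≤ 0) (n : ℕ) :
    Hgen n γ ≤ n * (n : ℝ) ^ (-γ) := by
  have hterm : ∀ k ∈ Icc 1 n, (k : ℝ) ^ (-γ) ≤ (n : ℝ) ^ (-γ) := fun k hk =>
    rpow_le_rpow k.cast_nonneg (by exact_mod_cast (mem_Icc.mp hk).2) (by linarith)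
  simpa [Hgen] using sum_le_card_nsmul _ _ _ hterm

theorem Hgen_le_of_nonneg {γ : ℝ} (hγ0 : 0 ≤ γ) (hγ2 : γ < 2) (n : ℕ) :
    Hgen n γ ≤ (n : ℝ) ^ (1 + γ / 2) * (n : ℝ) ^ (-γ) / (1 - γ / 2) := by
  have hs : 0 < 1 - γ / 2 := by linarith
  have hterm : ∀ k ∈ Icc 1 n, (k : ℝ) ^ (-γ) ≤ (k : ℝ) ^ (1 - γ / 2 - 1) := fun k hk =>
    rpow_le_rpow_of_exponent_le (by exact_mod_cast (mem_Icc.mp hk).1) (by linarith)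
  rw [← rpow_add' n.cast_nonneg (by linarith), le_div_iff₀ hs, mul_comm]
  calc (1 - γ / 2) * Hgen n γ ≤ (1 - γ / 2) * ∑ k ∈ Icc 1 n, (k : ℝ) ^ (1 - γ / 2 - 1) :=
        mul_le_mul_of_nonneg_left (sum_le_sum hterm) hs.le
    _ ≤ (n : ℝ) ^ (1 - γ / 2) := mul_sum_Icc_rpow_sub_one_le hs.le (by linarith) n
    _ = (n : ℝ) ^ (1 + γ / 2 + -γ) := by ring_nf

theorem exists_Hgen_le_rpow {γ : ℝ} (hγ : γ < 2) : ∃ C a : ℝ, 0 ≤ C ∧ 0 ≤ a ∧ a < 2 ∧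
    ∀ n : ℕ, Hgen n γ ≤ C * (n : ℝ) ^ a * (n : ℝ) ^ (-γ) := by
  rcases le_total γ 0 with hγ0 | hγ0
  · exact ⟨1, 1, zero_le_one, zero_le_one, one_lt_two, fun n => by
      simpa using Hgen_le_of_nonpos hγ0 n⟩
  · refine ⟨1 / (1 - γ / 2), 1 + γ / 2, by bound, by linarith, by linarith, fun n => ?_⟩
    rw [mul_assoc, one_div_mul_eq_div]
    exact Hgen_le_of_nonneg hγ0 hγ n

theorem two_rpow_neg_abs_mul_rpow_neg_le {k x : ℝ} (γ : ℝ) (hk : 0 < k) (hkx : k ≤ x)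
    (hxk : x ≤ 2 * k) : (2 : ℝ) ^ (-|γ|) * x ^ (-γ) ≤ k ^ (-γ) := by
  rcases le_total 0 γ with hγ | hγ
  · calc (2 : ℝ) ^ (-|γ|) * x ^ (-γ) ≤ x ^ (-γ) :=
          mul_le_of_le_one_left (rpow_nonneg (by linarith) _)
            (rpow_le_one_of_one_le_of_nonpos one_le_two (neg_nonpos.mpr (abs_nonneg γ)))
      _ ≤ k ^ (-γ) := rpow_le_rpow_of_nonpos hk hkx (by linarith)
  · calc (2 : ℝ) ^ (-|γ|) * x ^ (-γ) = (x / 2) ^ (-γ) := by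
          rw [abs_of_nonpos hγ, div_rpow (by linarith) zero_le_two, rpow_neg zero_le_two,
            div_eq_inv_mul]
      _ ≤ k ^ (-γ) := rpow_le_rpow (by linarith) (by linarith) (by linarith)

theorem mul_rpow_neg_le_sum_Icc {m N : ℕ} (γ : ℝ) (hm : 0 < m) (hmN : 2 * m ≤ N) :
    m * ((2 : ℝ) ^ (-|γ|) * ((N - 1 : ℕ) : ℝ) ^ (-γ)) ≤
      ∑ k ∈ Icc (N - m) (N - 1), (k : ℝ) ^ (-γ) := by
  have hterm : ∀ k ∈ Icc (N - m) (N - 1),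
      (2 : ℝ) ^ (-|γ|) * ((N - 1 : ℕ) : ℝ) ^ (-γ) ≤ (k : ℝ) ^ (-γ) := by
    intro k hk
    obtain ⟨hk1, hk2⟩ := mem_Icc.mp hk
    exact two_rpow_neg_abs_mul_rpow_neg_le γ (by exact_mod_cast (by omega : 0 < k))
      (by exact_mod_cast hk2) (by exact_mod_cast (by omega : N - 1 ≤ 2 * k))
  have hcard : #(Icc (N - m) (N - 1)) = m := by rw [Nat.card_Icc]; omega
  simpa [hcard] using card_nsmul_le_sum _ _ _ hterm

theorem dhat_le (N : ℕ) (γ : ℝ) : dhat N γ ≤ N - 1 :=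
  csSup_le' fun _ hx => hx.2.1

theorem le_dhat {N x : ℕ} {γ : ℝ} (hx1 : 1 ≤ x) (hxN : x ≤ N - 1)
    (hx : Hgen (N - 1) γ ≤ N * ∑ k ∈ Icc x (N - 1), (k : ℝ) ^ (-γ)) : x ≤ dhat N γ :=
  le_csSup ⟨N - 1, fun _ hy => hy.2.1⟩ ⟨hx1, hxN, hx⟩

theorem eventually_le_dhat {γ : ℝ} (hγ : γ < 2) {ε : ℝ} (hε0 : 0 < ε) (hε : ε ≤ 1 / 2) :
    ∀ᶠ N : ℕ in atTop, (1 - ε) * N ≤ dhat N γ := by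
  obtain ⟨C, a, hC, ha0, ha2, hH⟩ := exists_Hgen_le_rpow hγ
  set c : ℝ := (2 : ℝ) ^ (-|γ|)
  have hc : 0 < c := rpow_pos_of_pos two_pos _
  have hgrowth : ∀ᶠ N : ℕ in atTop, 2 * C / (c * ε) ≤ (N : ℝ) ^ (2 - a) :=
    ((tendsto_rpow_atTop (by linarith)).comp tendsto_natCast_atTop_atTop).eventually_ge_atTop _
  have hlarge : ∀ᶠ N : ℕ in atTop, 2 / ε ≤ (N : ℝ) :=
    tendsto_natCast_atTop_atTop.eventually_ge_atTop _
  filter_upwards [hgrowth, hlarge] with N hgrowth hlarge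
  have hεN : 2 ≤ ε * N := by rwa [div_le_iff₀' hε0] at hlarge
  set m := ⌊ε * N⌋₊
  have hm_le : (m : ℝ) ≤ ε * N := Nat.floor_le (by positivity)
  have hm_ge : ε * N / 2 ≤ m := by linarith [Nat.lt_floor_add_one (ε * N)]
  have hm0 : 0 < m := by exact_mod_cast (by linarith : (0 : ℝ) < m)
  have hN0 : (0 : ℝ) < N := (div_pos two_pos hε0).trans_le hlarge
  have h2m : 2 * m ≤ N := by
    have := mul_le_mul_of_nonneg_right hε hN0.le
    exact_mod_cast (by linarith : (2 * m : ℝ) ≤ N)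
  have hscale : C * (N : ℝ) ^ a ≤ c * N * m := calc
    C * (N : ℝ) ^ a ≤ c * ε / 2 * (N : ℝ) ^ (2 - a) * (N : ℝ) ^ a := by
        gcongr
        rw [div_le_iff₀' (by positivity)] at hgrowth
        linarith
    _ = c * N * (ε * N / 2) := by
        rw [mul_assoc, ← rpow_add hN0, sub_add_cancel, rpow_two]; ring
    _ ≤ c * N * m := by gcongr
  have hmass : Hgen (N - 1) γ ≤ N * ∑ k ∈ Icc (N - m) (N - 1), (k : ℝ) ^ (-γ) := calc
    Hgen (N - 1) γ ≤ C * ((N - 1 : ℕ) : ℝ) ^ a * ((N - 1 : ℕ) : ℝ) ^ (-γ) := hH _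
    _ ≤ C * (N : ℝ) ^ a * ((N - 1 : ℕ) : ℝ) ^ (-γ) := by gcongr; simp
    _ ≤ c * N * m * ((N - 1 : ℕ) : ℝ) ^ (-γ) := by gcongr
    _ = N * (m * (c * ((N - 1 : ℕ) : ℝ) ^ (-γ))) := by ring
    _ ≤ N * ∑ k ∈ Icc (N - m) (N - 1), (k : ℝ) ^ (-γ) := by
        gcongr; exact mul_rpow_neg_le_sum_Icc γ hm0 h2m
  have hdhat : N - m ≤ dhat N γ := le_dhat (by omega) (by omega) hmass
  calc (1 - ε) * N ≤ ((N - m : ℕ) : ℝ) := by push_cast [Nat.cast_sub (by omega : m ≤ N)]; linarith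
    _ ≤ dhat N γ := by exact_mod_cast hdhat

/-- For `γ < 2`, `lim_{N→∞} d̂_N(γ) / N = 1`, i.e. the expected maximum degree of a
power-law degree sequence with exponent `γ < 2` grows linearly in `N`. -/
theorem expected_max_degree_linear (γ : ℝ) (hγ : γ < 2) :
    Tendsto (fun N : ℕ => (dhat N γ : ℝ) / N) atTop (nhds 1) := by
  refine tendsto_order.2 ⟨fun b hb => ?_, fun b hb => ?_⟩
  · set ε := min ((1 - b) / 2) (1 / 2)
    have hε0 : 0 < ε := lt_min (by linarith) one_half_pos
    have hbε : b < 1 - ε := by linarith [min_le_left ((1 - b) / 2) (1 / 2)]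
    filter_upwards [eventually_le_dhat hγ hε0 (min_le_right _ _), eventually_gt_atTop 0]
      with N hN hN0
    have hN0' : (0 : ℝ) < N := by exact_mod_cast hN0
    rw [lt_div_iff₀ hN0']
    linarith [mul_lt_mul_of_pos_right hbε hN0']
  · refine Eventually.of_forall fun N => ?_
    have hle : (dhat N γ : ℝ) ≤ N := by exact_mod_cast (dhat_le N γ).trans (N.sub_le 1)
    exact (div_le_one_of_le₀ hle N.cast_nonneg).trans_lt hb
end

section
/- Fix a real γ < 2. For integer N ≥ 2 define the expected second-largest degree d̂2_N(γ) = max{ x ∈ {1, …, N−1} : N · Σ_{k=x}^{N−1} k^{−γ} ≥ 2·H_{N−1,γ} } (this set is nonempty for all sufficiently large N). Then lim_{N→∞} d̂2_N(γ) / N = 1, i.e., the second-largest degree also grows linearly in N. -/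
open Filter

/-- The expected second-largest degree of a power-law degree sequence with exponent `γ` on
`N` nodes: `d̂2_N(γ) = max { x ∈ {1,…,N-1} : N · ∑_{k=x}^{N-1} k^{-γ} ≥ 2·H_{N-1,γ} }`. -/
noncomputable def dhat2 (N : ℕ) (γ : ℝ) : ℕ :=
  sSup {x : ℕ | 1 ≤ x ∧ x ≤ N - 1 ∧
    2 * Hgen (N - 1) γ ≤ (N : ℝ) * ∑ k ∈ Finset.Icc x (N - 1), (k : ℝ) ^ (-γ)}

/-!
The sum `H_{N-1,γ}` is `O(max(1, N^{1-γ}) log N)`, which is `o(N^{2-γ})` exactly because `γ < 2`.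
On the other hand, the top `⌊εN⌋ + 1` degrees lie in `[N/2, N]`, so each weighs at least
`min(2^γ, 1) N^{-γ}`, and `N` times their sum is at least `min(2^γ, 1) ε N^{2-γ}`. Hence
`N - 1 - ⌊εN⌋` belongs to the defining set for all large `N`, which gives both its nonemptiness and
`d̂2_N(γ) / N ≥ 1 - ε - 1/N`; the upper bound `d̂2_N(γ) ≤ N - 1` is built into the definition.
-/

open Real Topology

lemma tendsto_one_add_log_div_rpow_atTop {s : ℝ} (hs : 0 < s) :
    Tendsto (fun x : ℝ => (1 + log x) / x ^ s) atTop (𝓝 0) := by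
  have hinv : Tendsto (fun x : ℝ => (x ^ s)⁻¹) atTop (𝓝 0) :=
    tendsto_inv_atTop_zero.comp (tendsto_rpow_atTop hs)
  simpa [add_div] using hinv.add (isLittleO_log_rpow_atTop hs).tendsto_div_nhds_zero

lemma rpow_le_max_one_rpow {t n : ℝ} (ht : 1 ≤ t) (htn : t ≤ n) (p : ℝ) :
    t ^ p ≤ max 1 (n ^ p) := by
  rcases le_total p 0 with hp | hp
  · exact (rpow_le_one_of_one_le_of_nonpos ht hp).trans (le_max_left _ _)
  · exact (rpow_le_rpow (by linarith) htn hp).trans (le_max_right _ _)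

lemma Hgen_monotone (b : ℝ) : Monotone fun a => Hgen a b := fun _ _ h =>
  Finset.sum_le_sum_of_subset_of_nonneg (Finset.Icc_subset_Icc_right h)
    fun t _ _ => rpow_nonneg t.cast_nonneg _

lemma Hgen_le_max_one_rpow_mul_harmonic (n : ℕ) (γ : ℝ) :
    Hgen n γ ≤ max 1 ((n : ℝ) ^ (1 - γ)) * harmonic n := by
  rw [harmonic_eq_sum_Icc, Rat.cast_sum, Finset.mul_sum]
  refine Finset.sum_le_sum fun t ht => ?_
  obtain ⟨ht1, htn⟩ := Finset.mem_Icc.mp ht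
  have ht0 : (0 : ℝ) < t := by exact_mod_cast ht1
  have hsplit : (t : ℝ) ^ (-γ) = (t : ℝ) ^ (1 - γ) * (t : ℝ)⁻¹ := by
    rw [← rpow_neg_one, ← rpow_add ht0]
    ring_nf
  rw [hsplit, Rat.cast_inv, Rat.cast_natCast]
  gcongr
  exact rpow_le_max_one_rpow (by exact_mod_cast ht1) (by exact_mod_cast htn) _

lemma tendsto_Hgen_div_rpow {γ : ℝ} (hγ : γ < 2) :
    Tendsto (fun N : ℕ => Hgen N γ / (N : ℝ) ^ (2 - γ)) atTop (𝓝 0) := by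
  have hbound : Tendsto (fun N : ℕ => max ((1 + log N) / (N : ℝ) ^ (2 - γ))
      ((1 + log N) / (N : ℝ) ^ (1 : ℝ))) atTop (𝓝 0) := by
    have h := ((tendsto_one_add_log_div_rpow_atTop (sub_pos.2 hγ)).max
      (tendsto_one_add_log_div_rpow_atTop one_pos)).comp tendsto_natCast_atTop_atTop
    rwa [max_self] at h
  refine squeeze_zero' (Eventually.of_forall fun N => ?_) ?_ hbound
  · exact div_nonneg (Finset.sum_nonneg fun t _ => rpow_nonneg t.cast_nonneg _)
      (rpow_nonneg N.cast_nonneg _)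
  filter_upwards [eventually_ge_atTop 1] with N hN
  have hN0 : (0 : ℝ) < N := by exact_mod_cast hN
  have hlog : 0 ≤ 1 + log N := by
    have := log_nonneg (show (1 : ℝ) ≤ N by exact_mod_cast hN); linarith
  have hexp : (N : ℝ) ^ (1 - γ) / (N : ℝ) ^ (2 - γ) = 1 / (N : ℝ) ^ (1 : ℝ) := by
    rw [div_eq_div_iff (by positivity) (by positivity), one_mul, ← rpow_add hN0]
    ring_nf
  calc Hgen N γ / (N : ℝ) ^ (2 - γ)
      ≤ max 1 ((N : ℝ) ^ (1 - γ)) * (1 + log N) / (N : ℝ) ^ (2 - γ) := by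
        gcongr
        exact (Hgen_le_max_one_rpow_mul_harmonic N γ).trans
          (by gcongr; exact harmonic_le_one_add_log N)
    _ = _ := by
        rw [max_mul_of_nonneg _ _ hlog, ← max_div_div_right (by positivity), one_mul,
          mul_div_right_comm, hexp, one_div_mul_eq_div]

lemma min_two_rpow_one_mul_rpow_neg_le {γ N j : ℝ} (hj : 0 < j) (hNj : N ≤ 2 * j)
    (hjN : j ≤ N) : min (2 ^ γ) 1 * N ^ (-γ) ≤ j ^ (-γ) := by
  have hN : 0 < N := hj.trans_le hjN
  rcases le_total γ 0 with hγ | hγ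
  · calc min (2 ^ γ) 1 * N ^ (-γ) ≤ 2 ^ γ * N ^ (-γ) := by gcongr; exact min_le_left _ _
      _ = (N / 2) ^ (-γ) := by
        rw [div_rpow hN.le zero_le_two, rpow_neg zero_le_two, div_inv_eq_mul, mul_comm]
      _ ≤ j ^ (-γ) := rpow_le_rpow (by positivity) (by linarith) (by linarith)
  · calc min (2 ^ γ) 1 * N ^ (-γ) ≤ 1 * N ^ (-γ) := by gcongr; exact min_le_right _ _
      _ = N ^ (-γ) := one_mul _
      _ ≤ j ^ (-γ) := rpow_le_rpow_of_nonpos hj hjN (by linarith)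

lemma card_mul_le_sum_Icc_rpow_neg {γ : ℝ} {x N : ℕ} (hx : 1 ≤ x) (hNx : (N : ℝ) ≤ 2 * x) :
    ((N - x : ℕ) : ℝ) * (min (2 ^ γ) 1 * (N : ℝ) ^ (-γ)) ≤
      ∑ j ∈ Finset.Icc x (N - 1), (j : ℝ) ^ (-γ) := by
  have hcard : (Finset.Icc x (N - 1)).card = N - x := by rw [Nat.card_Icc]; omega
  rw [← hcard, ← nsmul_eq_mul]
  refine Finset.card_nsmul_le_sum _ _ _ fun j hj => ?_
  obtain ⟨hxj, hjN⟩ := Finset.mem_Icc.mp hj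
  have hxj' : (x : ℝ) ≤ j := by exact_mod_cast hxj
  exact min_two_rpow_one_mul_rpow_neg_le (by exact_mod_cast hx.trans hxj) (by linarith)
    (by exact_mod_cast hjN.trans (N.sub_le 1))

def dhat2Set (N : ℕ) (γ : ℝ) : Set ℕ :=
  {x : ℕ | 1 ≤ x ∧ x ≤ N - 1 ∧
    2 * Hgen (N - 1) γ ≤ (N : ℝ) * ∑ k ∈ Finset.Icc x (N - 1), (k : ℝ) ^ (-γ)}

lemma le_dhat2 {N x : ℕ} {γ : ℝ} (hx : x ∈ dhat2Set N γ) : x ≤ dhat2 N γ :=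
  le_csSup ⟨N - 1, fun _ hy => hy.2.1⟩ hx

lemma dhat2_div_le_one (N : ℕ) (γ : ℝ) : (dhat2 N γ : ℝ) / N ≤ 1 := by
  have h : dhat2 N γ ≤ N := (csSup_le' fun _ hy => hy.2.1 : dhat2 N γ ≤ N - 1).trans (N.sub_le 1)
  exact div_le_one_of_le₀ (by exact_mod_cast h) N.cast_nonneg

lemma sub_one_sub_floor_mem_dhat2Set {γ ε : ℝ} (hγ : γ < 2) (hε : 0 < ε) (hε2 : ε < 1 / 2) :
    ∀ᶠ N : ℕ in atTop, N - 1 - ⌊ε * N⌋₊ ∈ dhat2Set N γ := by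
  set c := min ((2 : ℝ) ^ γ) 1
  have hc : 0 < c := lt_min (rpow_pos_of_pos two_pos γ) one_pos
  have hlarge : ∀ᶠ N : ℕ in atTop, 1 ≤ (N : ℝ) * (1 / 2 - ε) :=
    (tendsto_natCast_atTop_atTop.atTop_mul_const (by linarith)).eventually_ge_atTop 1
  have hsmall : ∀ᶠ N : ℕ in atTop, Hgen N γ / (N : ℝ) ^ (2 - γ) < ε * c / 2 :=
    (tendsto_Hgen_div_rpow hγ).eventually (gt_mem_nhds (by positivity))
  filter_upwards [hlarge, hsmall] with N hN hH
  set k := ⌊ε * N⌋₊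
  have hN0 : (0 : ℝ) < N := by nlinarith
  have hk : (k : ℝ) ≤ ε * N := Nat.floor_le (by positivity)
  have hkN : 2 * k + 2 ≤ N := by exact_mod_cast (by linarith : 2 * (k : ℝ) + 2 ≤ N)
  have hx : ((N - 1 - k : ℕ) : ℝ) = N - 1 - k := by
    rw [Nat.sub_sub, Nat.cast_sub (by omega)]; push_cast; ring
  have htail := card_mul_le_sum_Icc_rpow_neg (γ := γ) (x := N - 1 - k) (N := N) (by omega)
    (by rw [hx]; linarith)
  rw [show N - (N - 1 - k) = k + 1 by omega, Nat.cast_succ] at htail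
  refine ⟨by omega, by omega, ?_⟩
  have hpow : (N : ℝ) ^ (2 - γ) = N * N * (N : ℝ) ^ (-γ) := by
    rw [show 2 - γ = 1 + 1 + -γ by ring, rpow_add hN0, rpow_add hN0, rpow_one]
  calc 2 * Hgen (N - 1) γ ≤ 2 * Hgen N γ := by gcongr; exact Hgen_monotone γ (N.sub_le 1)
    _ ≤ ε * c * (N : ℝ) ^ (2 - γ) := by
        have := (div_lt_iff₀ (rpow_pos_of_pos hN0 _)).1 hH; linarith
    _ = N * (ε * N * (c * (N : ℝ) ^ (-γ))) := by rw [hpow]; ring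
    _ ≤ N * ((k + 1) * (c * (N : ℝ) ^ (-γ))) := by
        gcongr; exact (Nat.lt_floor_add_one _).le
    _ ≤ _ := by gcongr

lemma eventually_lt_dhat2_div {γ a : ℝ} (hγ : γ < 2) (ha : a < 1) :
    ∀ᶠ N : ℕ in atTop, a < dhat2 N γ / N := by
  set ε := min ((1 - a) / 2) (1 / 4)
  have hε : 0 < ε := lt_min (by linarith) (by norm_num)
  have hε2 : ε < 1 / 2 := (min_le_right _ _).trans_lt (by norm_num)
  have haε : a < 1 - ε := by linarith [min_le_left ((1 - a) / 2) (1 / 4)]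
  have hlim : Tendsto (fun N : ℕ => 1 - ε - 1 / (N : ℝ)) atTop (𝓝 (1 - ε)) := by
    simpa using (tendsto_const_nhds (x := 1 - ε)).sub tendsto_one_div_atTop_nhds_zero_nat
  filter_upwards [hlim.eventually (lt_mem_nhds haε), sub_one_sub_floor_mem_dhat2Set hγ hε hε2]
    with N hlt hmem
  have hk : (⌊ε * N⌋₊ : ℝ) ≤ ε * N := Nat.floor_le (by positivity)
  have hN0 : (0 : ℝ) < N := by have := hmem.1; exact_mod_cast (by omega : 0 < N)
  calc a < 1 - ε - 1 / N := hlt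
    _ = (N - 1 - ε * N) / N := by field_simp; ring
    _ ≤ (N - 1 - ⌊ε * N⌋₊ : ℕ) / N := by
        gcongr
        rw [Nat.sub_sub, Nat.cast_sub (by have := hmem.1; omega)]
        push_cast; linarith
    _ ≤ dhat2 N γ / N := by gcongr; exact_mod_cast le_dhat2 hmem

/-- For `γ < 2`, the defining set of `d̂2_N(γ)` is nonempty for all sufficiently large `N`,
and `lim_{N→∞} d̂2_N(γ) / N = 1`: the second-largest degree also grows linearly in `N`. -/
theorem expected_second_max_degree_linear (γ : ℝ) (hγ : γ < 2) :
    (∀ᶠ N : ℕ in atTop,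
      {x : ℕ | 1 ≤ x ∧ x ≤ N - 1 ∧
        2 * Hgen (N - 1) γ ≤ (N : ℝ) * ∑ k ∈ Finset.Icc x (N - 1), (k : ℝ) ^ (-γ)}.Nonempty) ∧
    Tendsto (fun N : ℕ => (dhat2 N γ : ℝ) / N) atTop (nhds 1) :=
  ⟨(sub_one_sub_floor_mem_dhat2Set hγ (ε := 1 / 4) (by norm_num) (by norm_num)).mono
      fun _ h => ⟨_, h⟩,
    tendsto_order.2 ⟨fun _ ha => eventually_lt_dhat2_div hγ ha,
      fun _ ha => Eventually.of_forall fun N => (dhat2_div_le_one N γ).trans_lt ha⟩⟩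
end

section
/- Fix a real γ with 0 < γ < 1. For integer N ≥ 2 let S_N = (s_0, …, s_{N−1}) be the degree-maximizing sequence with exponent γ, and let A_N = #{ i ∈ {0, …, N−1} : s_i = 1 }. Then lim_{N→∞} A_N / N^{γ} = 1 − γ; in particular A_N → ∞ but A_N/N → 0. -/
open Filter

/-- The degree-maximizing sequence with exponent `γ` on `N` nodes:
`s_i = max { s ∈ {1,…,N-1} : N · ∑_{d=s}^{N-1} d^{-γ} ≥ (i+1) · H_{N-1,γ} }`. -/
noncomputable def seqS (N : ℕ) (γ : ℝ) (i : ℕ) : ℕ :=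
  sSup {s : ℕ | 1 ≤ s ∧ s ≤ N - 1 ∧
    ((i : ℝ) + 1) * Hgen (N - 1) γ ≤ (N : ℝ) * ∑ d ∈ Finset.Icc s (N - 1), (d : ℝ) ^ (-γ)}

/-- The number of entries `s_i` (for `i ∈ {0,…,N-1}`) of the degree-maximizing sequence
that are equal to `1`. -/
noncomputable def Acount (N : ℕ) (γ : ℝ) : ℕ :=
  {i : ℕ | i < N ∧ seqS N γ i = 1}.ncard

/-!
Because the tail sums `∑_{d=s}^{N-1} d^{-γ}` decrease in `s`, the entry `s_i` equals `1` exactly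
when `s = 2` is not admissible, i.e. when `N (H - 1) < (i + 1) H` for `H = H_{N-1,γ}`. Hence
`A_N = ⌈N / H_{N-1,γ}⌉`. Comparing the sum with `∫ x^{-γ} dx` gives
`H_{N-1,γ} = N^{1-γ} / (1 - γ) + O(1)`, so `A_N ~ (1 - γ) N^γ`, which gives all three limits.
-/

open Asymptotics

theorem Asymptotics.isEquivalent_of_abs_sub_le {α : Type*} {l : Filter α} {u v : α → ℝ}
    (c : ℝ) (huv : ∀ᶠ x in l, |u x - v x| ≤ c) (hv : Tendsto v l atTop) : u ~[l] v :=
  (IsBigO.of_bound c (by simpa using huv) : (u - v) =O[l] fun _ => (1 : ℝ)).trans_isLittleO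
    (isLittleO_const_left.mpr (Or.inr (tendsto_abs_atTop_atTop.comp hv)))

lemma hgen_eq_one_add_sum_Icc_two (γ : ℝ) {n : ℕ} (hn : 1 ≤ n) :
    Hgen n γ = 1 + ∑ d ∈ Finset.Icc 2 n, (d : ℝ) ^ (-γ) := by
  rw [Hgen, ← Finset.add_sum_Ioc_eq_sum_Icc hn, Nat.cast_one, Real.one_rpow,
    ← Finset.Icc_add_one_left_eq_Ioc]
  rfl

lemma one_le_hgen (γ : ℝ) {n : ℕ} (hn : 1 ≤ n) : 1 ≤ Hgen n γ := by
  rw [hgen_eq_one_add_sum_Icc_two γ hn]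
  exact le_add_of_nonneg_right (Finset.sum_nonneg fun d _ => Real.rpow_nonneg (Nat.cast_nonneg d) _)

lemma seqS_eq_one_iff (γ : ℝ) {N i : ℕ} (hN : 2 ≤ N) (hi : i < N) :
    seqS N γ i = 1 ↔ (N : ℝ) - N / Hgen (N - 1) γ < i + 1 := by
  set H := Hgen (N - 1) γ
  set T : Set ℕ := {s : ℕ | 1 ≤ s ∧ s ≤ N - 1 ∧
    ((i : ℝ) + 1) * H ≤ (N : ℝ) * ∑ d ∈ Finset.Icc s (N - 1), (d : ℝ) ^ (-γ)}
  have hH : 1 ≤ H := one_le_hgen γ (by omega)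
  have htail : ∑ d ∈ Finset.Icc 2 (N - 1), (d : ℝ) ^ (-γ) = H - 1 := by
    simp only [H, hgen_eq_one_add_sum_Icc_two γ (show 1 ≤ N - 1 by omega)]; ring
  have hbdd : BddAbove T := ⟨N - 1, fun s hs => hs.2.1⟩
  have h1T : 1 ∈ T := by
    refine ⟨le_rfl, by omega, ?_⟩
    have : (i : ℝ) + 1 ≤ N := by exact_mod_cast hi
    exact mul_le_mul_of_nonneg_right this (by linarith)
  have hgt : (∃ s ∈ T, 1 < s) ↔ ((i : ℝ) + 1) * H ≤ N * (H - 1) := by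
    constructor
    · rintro ⟨s, ⟨-, -, hs⟩, h1s⟩
      refine hs.trans (mul_le_mul_of_nonneg_left ?_ (Nat.cast_nonneg N))
      rw [← htail]
      exact Finset.sum_le_sum_of_subset_of_nonneg (Finset.Icc_subset_Icc_left h1s)
        fun d _ _ => Real.rpow_nonneg (Nat.cast_nonneg d) _
    · intro h
      have h2N : 2 ≤ N - 1 := by
        by_contra h2N
        rw [Finset.Icc_eq_empty (by omega), Finset.sum_empty] at htail
        nlinarith
      exact ⟨2, ⟨one_le_two, h2N, htail ▸ h⟩, one_lt_two⟩
  have hS : 1 ≤ seqS N γ i := le_csSup hbdd h1T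
  have hlt : 1 < seqS N γ i ↔ ∃ s ∈ T, 1 < s := lt_csSup_iff hbdd ⟨1, h1T⟩
  have hdiv : (N : ℝ) - N / H = N * (H - 1) / H := by field_simp
  rw [hdiv, div_lt_iff₀ (by linarith), ← not_le, ← hgt, ← hlt]
  omega

lemma acount_eq_ceil (γ : ℝ) {N : ℕ} (hN : 2 ≤ N) :
    Acount N γ = ⌈(N : ℝ) / Hgen (N - 1) γ⌉₊ := by
  set x := (N : ℝ) / Hgen (N - 1) γ
  have hH : 1 ≤ Hgen (N - 1) γ := one_le_hgen γ (by omega)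
  have hxN : ⌈x⌉₊ ≤ N := Nat.ceil_le.mpr (div_le_self (Nat.cast_nonneg N) hH)
  have hmem : ∀ i < N, seqS N γ i = 1 ↔ N - ⌈x⌉₊ ≤ i := fun i hi => by
    rw [seqS_eq_one_iff γ hN hi]
    change (N : ℝ) - x < i + 1 ↔ _
    rw [sub_lt_comm, ← Nat.cast_add_one,
      ← Nat.cast_sub (by omega : i + 1 ≤ N), ← Nat.lt_ceil]
    omega
  have hset : {i : ℕ | i < N ∧ seqS N γ i = 1} = ↑(Finset.Ico (N - ⌈x⌉₊) N) := by
    ext i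
    simp only [Set.mem_ofPred_eq, Finset.coe_Ico, Set.mem_Ico]
    exact ⟨fun ⟨hi, hs⟩ => ⟨(hmem i hi).mp hs, hi⟩,
      fun ⟨hs, hi⟩ => ⟨hi, (hmem i hi).mpr hs⟩⟩
  rw [Acount, hset, Set.ncard_coe_finset, Nat.card_Ico]
  omega

lemma antitoneOn_rpow_neg_Icc {γ a : ℝ} (hγ : 0 ≤ γ) (ha : 0 < a) (b : ℝ) :
    AntitoneOn (fun x : ℝ => x ^ (-γ)) (Set.Icc a b) :=
  (Real.antitoneOn_rpow_Ioi_of_exponent_nonpos (neg_nonpos.mpr hγ)).mono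
    fun _ hx => ha.trans_le hx.1

lemma integral_one_rpow_neg {γ : ℝ} (hγ : γ ≠ 1) {b : ℝ} (hb : 1 ≤ b) :
    ∫ x in (1 : ℝ)..b, x ^ (-γ) = (b ^ (1 - γ) - 1) / (1 - γ) := by
  have h0 : (0 : ℝ) ∉ Set.uIcc 1 b := by
    rw [Set.uIcc_of_le hb]; exact fun h => absurd h.1 (by norm_num)
  rw [integral_rpow (Or.inr ⟨by contrapose! hγ; linarith, h0⟩), Real.one_rpow, neg_add_eq_sub]

lemma rpow_sub_one_div_le_hgen {γ : ℝ} (hγ0 : 0 ≤ γ) (hγ1 : γ ≠ 1) (n : ℕ) :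
    (((n : ℝ) + 1) ^ (1 - γ) - 1) / (1 - γ) ≤ Hgen n γ := by
  have h := (antitoneOn_rpow_neg_Icc hγ0 (by norm_num) _).integral_le_sum_Ico (Nat.le_add_left 1 n)
  rw [Nat.cast_one, Nat.cast_add_one, integral_one_rpow_neg hγ1 (by simp),
    Finset.Ico_add_one_right_eq_Icc] at h
  exact h

lemma hgen_le_rpow_div {γ : ℝ} (hγ0 : 0 ≤ γ) (hγ1 : γ < 1) {n : ℕ} (hn : 1 ≤ n) :
    Hgen n γ ≤ (n : ℝ) ^ (1 - γ) / (1 - γ) := by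
  have h := (antitoneOn_rpow_neg_Icc hγ0 (by norm_num) _).sum_le_integral_Ico hn
  rw [Nat.cast_one, integral_one_rpow_neg hγ1.ne (by exact_mod_cast hn),
    Finset.sum_Ico_add' (fun i : ℕ => (i : ℝ) ^ (-γ)), Finset.Ico_add_one_right_eq_Icc] at h
  have hp : 1 ≤ 1 / (1 - γ) := by rw [le_div_iff₀ (by linarith)]; linarith
  rw [hgen_eq_one_add_sum_Icc_two γ hn]
  linarith [sub_div ((n : ℝ) ^ (1 - γ)) 1 (1 - γ)]

lemma isEquivalent_hgen_pred {γ : ℝ} (hγ0 : 0 ≤ γ) (hγ1 : γ < 1) :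
    (fun N : ℕ => Hgen (N - 1) γ) ~[atTop] fun N => (N : ℝ) ^ (1 - γ) / (1 - γ) := by
  have hp : 0 < 1 - γ := by linarith
  refine isEquivalent_of_abs_sub_le (1 / (1 - γ)) ?_
    (((tendsto_rpow_atTop hp).comp tendsto_natCast_atTop_atTop).atTop_div_const hp)
  filter_upwards [eventually_ge_atTop 2] with N hN
  have hlow := rpow_sub_one_div_le_hgen hγ0 hγ1.ne (N - 1)
  rw [Nat.cast_sub (by omega), Nat.cast_one, sub_add_cancel, sub_div] at hlow
  have hupp : Hgen (N - 1) γ ≤ (N : ℝ) ^ (1 - γ) / (1 - γ) :=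
    (hgen_le_rpow_div hγ0 hγ1 (by omega)).trans (by gcongr; exact_mod_cast N.sub_le 1)
  rw [abs_sub_le_iff]
  constructor <;> linarith [one_div_pos.mpr hp]

lemma abs_natCeil_sub_le_one {x : ℝ} (hx : 0 ≤ x) : |(⌈x⌉₊ : ℝ) - x| ≤ 1 := by
  rw [abs_sub_le_iff]
  constructor <;> linarith [Nat.le_ceil x, Nat.ceil_lt_add_one hx]

lemma isEquivalent_acount {γ : ℝ} (hγ0 : 0 < γ) (hγ1 : γ < 1) :
    (fun N : ℕ => (Acount N γ : ℝ)) ~[atTop] fun N => (1 - γ) * (N : ℝ) ^ γ := by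
  have hp : 0 < 1 - γ := by linarith
  have hNH :
      (fun N : ℕ => (N : ℝ) / Hgen (N - 1) γ) ~[atTop] fun N => (1 - γ) * (N : ℝ) ^ γ := by
    refine (IsEquivalent.refl.div (isEquivalent_hgen_pred hγ0.le hγ1)).congr_right ?_
    filter_upwards [eventually_ge_atTop 1] with N hN
    have hN0 : (0 : ℝ) < N := by exact_mod_cast hN
    simp only [Pi.div_apply]
    rw [Real.rpow_sub hN0, Real.rpow_one]
    field_simp
  have hlim : Tendsto (fun N : ℕ => (1 - γ) * (N : ℝ) ^ γ) atTop atTop :=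
    ((tendsto_rpow_atTop hγ0).comp tendsto_natCast_atTop_atTop).const_mul_atTop hp
  refine (isEquivalent_of_abs_sub_le 1 ?_ (hNH.symm.tendsto_atTop hlim)).trans hNH
  filter_upwards [eventually_ge_atTop 2] with N hN
  rw [acount_eq_ceil γ hN]
  have hH : 0 < Hgen (N - 1) γ := zero_lt_one.trans_le (one_le_hgen γ (by omega))
  exact abs_natCeil_sub_le_one (div_nonneg (Nat.cast_nonneg N) hH.le)

/-- For `0 < γ < 1`, `lim_{N→∞} A_N / N^γ = 1 - γ`; in particular `A_N → ∞` but
`A_N / N → 0`. -/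
theorem unit_degree_count_gamma_between_zero_one (γ : ℝ) (h0 : 0 < γ) (h1 : γ < 1) :
    Tendsto (fun N : ℕ => (Acount N γ : ℝ) / (N : ℝ) ^ γ) atTop (nhds (1 - γ)) ∧
    Tendsto (fun N : ℕ => Acount N γ) atTop atTop ∧
    Tendsto (fun N : ℕ => (Acount N γ : ℝ) / N) atTop (nhds 0) := by
  have hA := isEquivalent_acount h0 h1
  have hpow : Tendsto (fun N : ℕ => (N : ℝ) ^ γ) atTop atTop :=
    (tendsto_rpow_atTop h0).comp tendsto_natCast_atTop_atTop
  refine ⟨(hA.div IsEquivalent.refl).symm.tendsto_nhds ?_,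
    tendsto_natCast_atTop_iff.mp (hA.symm.tendsto_atTop (hpow.const_mul_atTop (by linarith))),
    (hA.div IsEquivalent.refl).symm.tendsto_nhds ?_⟩
  · refine tendsto_const_nhds.congr' ?_
    filter_upwards [hpow.eventually_gt_atTop 0] with N hN
    exact (mul_div_cancel_right₀ _ hN.ne').symm
  · have hdecay : Tendsto (fun N : ℕ => (N : ℝ) ^ (γ - 1)) atTop (nhds 0) := by
      rw [← neg_sub]
      exact (tendsto_rpow_neg_atTop (by linarith)).comp tendsto_natCast_atTop_atTop
    refine (mul_zero (1 - γ) ▸ hdecay.const_mul (1 - γ)).congr' ?_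
    filter_upwards [eventually_ge_atTop 1] with N hN
    simp only [Pi.div_apply]
    rw [Real.rpow_sub_one (by positivity), mul_div_assoc]
end

section
/- Let N ≥ 2 and let D = (d_0, …, d_{N−1}) be a non-increasing sequence of positive integers (d_i ≥ 1 for all i) with d_1 ≥ 2, and let A = #{ i : d_i = 1 }. If D is graphical, then d_0 + d_1 ≤ 2N − 2 − A. -/
/-!
For any two distinct vertices `v ≠ w` of a graph on `N` vertices,
`deg v + deg w = #(N v ∪ N w) + #(N v ∩ N w)`. The union has at most `N` elements. A common
neighbour of `v` and `w` is neither `v` nor `w` and has degree at least two, so the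
intersection misses `v`, `w` and the `A` leaves; when `deg v, deg w ≥ 2` these are
`A + 2` distinct vertices, so the intersection has at most `N - 2 - A` elements.
-/

open Finset

namespace SimpleGraph

variable {V : Type*} [Fintype V] [DecidableEq V] (G : SimpleGraph V) [DecidableRel G.Adj]

theorem two_le_degree_of_adj_of_adj {u v w : V} (hvw : v ≠ w) (hv : G.Adj v u)
    (hw : G.Adj w u) : 2 ≤ G.degree u := by
  have hsub : ({v, w} : Finset V) ⊆ G.neighborFinset u := by
    intro x hx
    rcases mem_insert.mp hx with rfl | hx
    · exact (G.mem_neighborFinset _ _).mpr hv.symm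
    · rw [mem_singleton.mp hx]
      exact (G.mem_neighborFinset _ _).mpr hw.symm
  simpa [card_pair hvw] using card_le_card hsub

theorem disjoint_inter_neighborFinset {v w : V} (hvw : v ≠ w) :
    Disjoint (G.neighborFinset v ∩ G.neighborFinset w)
      (insert v (insert w (univ.filter fun u => G.degree u = 1))) := by
  rw [disjoint_right]
  intro u hu hcommon
  rw [mem_inter, mem_neighborFinset, mem_neighborFinset] at hcommon
  obtain ⟨hv, hw⟩ := hcommon
  rcases mem_insert.mp hu with rfl | hu
  · exact G.loopless.irrefl _ hv
  rcases mem_insert.mp hu with rfl | hu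
  · exact G.loopless.irrefl _ hw
  have := G.two_le_degree_of_adj_of_adj hvw hv hw
  simp only [mem_filter, mem_univ, true_and] at hu
  omega

theorem degree_add_degree_add_card_le {v w : V} (hvw : v ≠ w) :
    G.degree v + G.degree w + #(insert v (insert w (univ.filter fun u => G.degree u = 1))) ≤
      2 * Fintype.card V := by
  have hunion : #(G.neighborFinset v ∪ G.neighborFinset w) ≤ Fintype.card V := card_le_univ _
  have hinter := card_le_univ ((G.neighborFinset v ∩ G.neighborFinset w) ∪
    insert v (insert w (univ.filter fun u => G.degree u = 1)))
  rw [card_union_of_disjoint (G.disjoint_inter_neighborFinset hvw)] at hinter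
  have := card_union_add_card_inter (G.neighborFinset v) (G.neighborFinset w)
  rw [card_neighborFinset_eq_degree, card_neighborFinset_eq_degree] at this
  omega

end SimpleGraph

/-- For a non-increasing sequence of positive integers on `N ≥ 2` nodes with `d 1 ≥ 2`,
letting `A = #{i : d i = 1}`: if the sequence is graphical (realized as the degree sequence
of a simple graph), then `d 0 + d 1 ≤ 2N - 2 - A`. This is the `k = 1` instance of the
Erdős–Gallai inequality. -/
theorem two_largest_degrees_bound
    (N : ℕ) (hN : 2 ≤ N) (d : Fin N → ℕ)
    (hmono : Antitone d)
    (hd1 : 2 ≤ d ⟨1, by omega⟩)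
    (A : ℕ) (hA : A = (Finset.univ.filter (fun i : Fin N => d i = 1)).card)
    (hgraph : ∃ (G : SimpleGraph (Fin N)) (_ : DecidableRel G.Adj),
      ∀ i, G.degree i = d i) :
    (d ⟨0, by omega⟩ : ℤ) + (d ⟨1, by omega⟩ : ℤ) ≤ 2 * (N : ℤ) - 2 - (A : ℤ) := by
  obtain ⟨G, _, hdeg⟩ := hgraph
  set v₀ : Fin N := ⟨0, by omega⟩
  set v₁ : Fin N := ⟨1, by omega⟩
  have hne : v₀ ≠ v₁ := by simp [v₀, v₁, Fin.ext_iff]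
  have hd0 : 2 ≤ d v₀ := hd1.trans (hmono (by simp [v₀, v₁, Fin.le_def]))
  have hleaves :
      (univ.filter fun u => G.degree u = 1) = (univ.filter fun u => d u = 1) := by
    simp only [hdeg]
  have hcard : #(insert v₀ (insert v₁ (univ.filter fun u => G.degree u = 1))) = A + 2 := by
    rw [hleaves, card_insert_of_notMem, card_insert_of_notMem, hA]
    · simp only [mem_filter, mem_univ, true_and]
      omega
    · simp only [mem_insert, mem_filter, mem_univ, true_and, not_or]
      exact ⟨hne, by omega⟩
  have := G.degree_add_degree_add_card_le hne
  rw [hcard, hdeg, hdeg, Fintype.card_fin] at this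
  omega
end

section
/- Fix a real γ > 2. Then there exists N₀ such that for every integer N ≥ N₀, the degree-maximizing sequence S_N = (s_0, …, s_{N−1}) with exponent γ satisfies the Erdős–Gallai inequality at k = 1: s_0 + s_1 ≤ 2N − 2 − A_N, where A_N = #{ i : s_i = 1 }. -/
open Filter

/-!
Every term `s_i` is at most the largest `s` whose tail `N · ∑_{d ≥ s} d^{-γ}` is still `≥ 1`;
comparing with `∑_{d ≥ s} d^{-2} ≤ 2/s` gives `s_i ≤ (2N)^{1/(γ-1)} = o(N)`. Since `A_N ≤ N`,
it then suffices that `s_0 + s_1 ≤ N - 2`, which holds once `2 (2N)^{1/(γ-1)} ≤ N - 2`.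
-/

lemma sum_Icc_inv_sq_le (s m : ℕ) (hs : 1 ≤ s) :
    ∑ d ∈ Finset.Icc s m, ((d : ℝ) ^ 2)⁻¹ ≤ 2 / s := by
  have hIcc : Finset.Icc s m = Finset.Ioo (s - 1) (m + 1) := by
    ext d; simp only [Finset.mem_Icc, Finset.mem_Ioo]; omega
  have hcast : ((s - 1 : ℕ) : ℝ) + 1 = s := by
    rw [Nat.cast_sub hs, Nat.cast_one, sub_add_cancel]
  simpa only [hIcc, hcast] using sum_Ioo_inv_sq_le (α := ℝ) (s - 1) (m + 1)

lemma sum_Icc_rpow_neg_le {γ : ℝ} (hγ : 2 ≤ γ) (s m : ℕ) (hs : 1 ≤ s) :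
    ∑ d ∈ Finset.Icc s m, (d : ℝ) ^ (-γ) ≤ 2 * (s : ℝ) ^ (1 - γ) := by
  have hs0 : (0 : ℝ) < s := by exact_mod_cast hs
  have hterm : ∀ d ∈ Finset.Icc s m, (d : ℝ) ^ (-γ) ≤ (s : ℝ) ^ (2 - γ) * ((d : ℝ) ^ 2)⁻¹ := by
    intro d hd
    have hsd : (s : ℝ) ≤ d := by exact_mod_cast (Finset.mem_Icc.mp hd).1
    have hd0 : (0 : ℝ) < d := hs0.trans_le hsd
    calc (d : ℝ) ^ (-γ) = (d : ℝ) ^ (2 - γ) * ((d : ℝ) ^ 2)⁻¹ := by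
          rw [← Real.rpow_two, ← Real.rpow_neg hd0.le, ← Real.rpow_add hd0]; ring_nf
      _ ≤ (s : ℝ) ^ (2 - γ) * ((d : ℝ) ^ 2)⁻¹ := by
          gcongr ?_ * _
          exact Real.rpow_le_rpow_of_nonpos hs0 hsd (by linarith)
  calc ∑ d ∈ Finset.Icc s m, (d : ℝ) ^ (-γ)
      ≤ (s : ℝ) ^ (2 - γ) * ∑ d ∈ Finset.Icc s m, ((d : ℝ) ^ 2)⁻¹ := by
        rw [Finset.mul_sum]; exact Finset.sum_le_sum hterm
    _ ≤ (s : ℝ) ^ (2 - γ) * (2 / s) := by gcongr; exact sum_Icc_inv_sq_le s m hs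
    _ = 2 * (s : ℝ) ^ (1 - γ) := by
        rw [div_eq_mul_inv, ← Real.rpow_neg_one, mul_left_comm, ← Real.rpow_add hs0]; ring_nf

lemma one_le_Hgen_s18 {a : ℕ} (ha : 1 ≤ a) (b : ℝ) : 1 ≤ Hgen a b := by
  have h1 : (1 : ℕ) ∈ Finset.Icc 1 a := Finset.mem_Icc.mpr ⟨le_rfl, ha⟩
  simpa [Hgen] using
    Finset.single_le_sum (fun t _ => by positivity) h1 (f := fun t : ℕ => (t : ℝ) ^ (-b))

lemma Nat.sSup_mem_of_pos {S : Set ℕ} (hS : BddAbove S) (hpos : 0 < sSup S) : sSup S ∈ S :=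
  Nat.sSup_mem (Set.nonempty_iff_ne_empty.mpr fun hempty => by simp [hempty] at hpos) hS

lemma seqS_spec {N : ℕ} {γ : ℝ} {i : ℕ} (hpos : 0 < seqS N γ i) :
    1 ≤ seqS N γ i ∧ seqS N γ i ≤ N - 1 ∧ ((i : ℝ) + 1) * Hgen (N - 1) γ ≤
      (N : ℝ) * ∑ d ∈ Finset.Icc (seqS N γ i) (N - 1), (d : ℝ) ^ (-γ) :=
  Nat.sSup_mem_of_pos ⟨N - 1, fun _ hs => hs.2.1⟩ hpos

lemma seqS_le_rpow {γ : ℝ} (hγ : 2 ≤ γ) (N i : ℕ) :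
    (seqS N γ i : ℝ) ≤ (2 * N) ^ (γ - 1)⁻¹ := by
  rcases Nat.eq_zero_or_pos (seqS N γ i) with hzero | hpos
  · rw [hzero, Nat.cast_zero]; positivity
  obtain ⟨hs1, hsN, hdef⟩ := seqS_spec hpos
  set s := seqS N γ i
  have hs0 : (0 : ℝ) < s := by exact_mod_cast hs1
  have hH : 1 ≤ ((i : ℝ) + 1) * Hgen (N - 1) γ :=
    one_le_mul_of_one_le_of_one_le (by linarith [(i.cast_nonneg : (0 : ℝ) ≤ i)])
      (one_le_Hgen_s18 (by omega) γ)
  have htail : 1 ≤ 2 * N * ((s : ℝ) ^ (γ - 1))⁻¹ := by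
    rw [← Real.rpow_neg hs0.le, neg_sub]
    nlinarith [hdef, sum_Icc_rpow_neg_le hγ s (N - 1) hs1, (N.cast_nonneg : (0 : ℝ) ≤ N)]
  rw [Real.le_rpow_inv_iff_of_pos hs0.le (by positivity) (by linarith)]
  rwa [← div_eq_mul_inv, one_le_div (by positivity)] at htail

lemma Acount_le (N : ℕ) (γ : ℝ) : Acount N γ ≤ N := by
  calc Acount N γ ≤ (Finset.range N : Set ℕ).ncard :=
        Set.ncard_le_ncard (fun i hi => Finset.mem_range.mpr hi.1) (Finset.range N).finite_toSet
    _ = N := by rw [Set.ncard_coe_finset, Finset.card_range]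

lemma eventually_two_mul_rpow_add_two_le {c : ℝ} (hc : c < 1) :
    ∀ᶠ N : ℕ in atTop, 2 * (2 * (N : ℝ)) ^ c + 2 ≤ N := by
  have hsmall : ∀ᶠ x : ℝ in atTop, x ^ (c - 1) < 1 / 8 := by
    have h0 : Tendsto (fun x : ℝ => x ^ (c - 1)) atTop (nhds 0) := by
      simpa only [neg_sub] using tendsto_rpow_neg_atTop (y := 1 - c) (by linarith)
    exact h0.eventually (gt_mem_nhds (by norm_num))
  filter_upwards [tendsto_natCast_atTop_atTop.eventually (hsmall.and (eventually_ge_atTop 4))]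
    with N ⟨hN, hN4⟩
  set x : ℝ := (N : ℝ)
  have hx0 : 0 < x := by linarith
  have h2c : (2 : ℝ) ^ c ≤ 2 := by
    simpa using Real.rpow_le_rpow_of_exponent_le one_le_two hc.le
  have hxc : x ^ c ≤ x / 8 := by
    rw [← sub_add_cancel c 1, Real.rpow_add_one hx0.ne']
    nlinarith
  rw [Real.mul_rpow zero_le_two hx0.le]
  nlinarith [Real.rpow_nonneg hx0.le c]

/-- For `γ > 2`, for all sufficiently large `N` the degree-maximizing sequence `S_N`
satisfies the Erdős–Gallai inequality at `k = 1`: `s_0 + s_1 ≤ 2N - 2 - A_N`. -/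
theorem sparse_power_law_EG_at_one (γ : ℝ) (hγ : 2 < γ) :
    ∃ N₀ : ℕ, ∀ N : ℕ, N₀ ≤ N →
      (seqS N γ 0 : ℤ) + (seqS N γ 1 : ℤ) ≤ 2 * (N : ℤ) - 2 - (Acount N γ : ℤ) := by
  have hc : (γ - 1)⁻¹ < 1 := inv_lt_one_of_one_lt₀ (by linarith)
  obtain ⟨N₀, hN₀⟩ := eventually_atTop.mp (eventually_two_mul_rpow_add_two_le hc)
  refine ⟨N₀, fun N hN => ?_⟩
  have hsum : (seqS N γ 0 : ℝ) + seqS N γ 1 ≤ N - 2 := by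
    linarith [seqS_le_rpow hγ.le N 0, seqS_le_rpow hγ.le N 1, hN₀ N hN]
  have hsumZ : (seqS N γ 0 : ℤ) + seqS N γ 1 ≤ N - 2 := by exact_mod_cast hsum
  have hA : (Acount N γ : ℤ) ≤ N := by exact_mod_cast Acount_le N γ
  linarith
end

section
/- Fix a real γ with 0 < γ < 2, and let f : ℕ → ℕ be a cutoff function satisfying f(N) ≤ N−1 for all N, f(N) → ∞, and f(N)/N → 0 as N → ∞. For integer N ≥ 2 define the cutoff degree-maximizing sequence S_N = (s_0, …, s_{N−1}) by s_i = max{ s ∈ {1, …, f(N)} : N · Σ_{d=s}^{f(N)} d^{−γ} ≥ (i+1) · H_{f(N),γ} }. Then there exists N₀ such that for all N ≥ N₀, s_0 + s_1 ≤ 2N − 2 − A_N, where A_N = #{ i : s_i = 1 }; i.e., imposing a sublinear cutoff on the power-law distribution restores the Erdős–Gallai inequality at k = 1, and the graphicality obstruction disappears. -/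
open Filter

/-- The cutoff degree-maximizing sequence with exponent `γ`, cutoff `f N`, on `N` nodes:
`s_i = max { s ∈ {1,…,f N} : N · ∑_{d=s}^{f N} d^{-γ} ≥ (i+1) · H_{f N,γ} }`. -/
noncomputable def seqSc (f : ℕ → ℕ) (N : ℕ) (γ : ℝ) (i : ℕ) : ℕ :=
  sSup {s : ℕ | 1 ≤ s ∧ s ≤ f N ∧
    ((i : ℝ) + 1) * Hgen (f N) γ ≤ (N : ℝ) * ∑ d ∈ Finset.Icc s (f N), (d : ℝ) ^ (-γ)}

/-- The number of entries `s_i` (for `i ∈ {0,…,N-1}`) of the cutoff degree-maximizing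
sequence that are equal to `1`. -/
noncomputable def AcountC (f : ℕ → ℕ) (N : ℕ) (γ : ℝ) : ℕ :=
  {i : ℕ | i < N ∧ seqSc f N γ i = 1}.ncard

/-! Every entry of the sequence is at most the cutoff `f N`, and at most `N` entries equal `1`.
Hence `s_0 + s_1 ≤ 2 f N`, while `2N - 2 - A_N ≥ N - 2`; since `f N = o(N)`, eventually
`2 f N + 2 < N`. -/

lemma seqSc_le_cutoff (f : ℕ → ℕ) (N : ℕ) (γ : ℝ) (i : ℕ) : seqSc f N γ i ≤ f N :=
  csSup_le' fun _ hs => hs.2.1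

lemma AcountC_le (f : ℕ → ℕ) (N : ℕ) (γ : ℝ) : AcountC f N γ ≤ N :=
  calc AcountC f N γ ≤ (Set.Iio N).ncard :=
        Set.ncard_le_ncard (fun _ hi => hi.1) (Set.finite_Iio N)
    _ = N := by simp

lemma eventually_two_mul_add_two_lt {g : ℕ → ℕ}
    (hg : Tendsto (fun N : ℕ => (g N : ℝ) / N) atTop (nhds 0)) :
    ∀ᶠ N in atTop, 2 * g N + 2 < N := by
  have hlim : Tendsto (fun N : ℕ => 2 * ((g N : ℝ) / N) + 2 / N) atTop (nhds 0) := by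
    simpa using (hg.const_mul 2).add (tendsto_const_div_atTop_nhds_zero_nat 2)
  filter_upwards [hlim.eventually_lt_const one_pos, eventually_gt_atTop 0] with N hN hN0
  rw [← mul_div_assoc, ← add_div, div_lt_one (by positivity)] at hN
  exact_mod_cast hN

theorem cutoff_restores_EG_at_one_general (γ : ℝ)
    (f : ℕ → ℕ)
    (hf3 : Tendsto (fun N : ℕ => (f N : ℝ) / N) atTop (nhds 0)) :
    ∃ N₀ : ℕ, ∀ N : ℕ, N₀ ≤ N →
      (seqSc f N γ 0 : ℤ) + (seqSc f N γ 1 : ℤ) ≤ 2 * (N : ℤ) - 2 - (AcountC f N γ : ℤ) := by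
  obtain ⟨N₀, hN₀⟩ := eventually_atTop.1 (eventually_two_mul_add_two_lt hf3)
  refine ⟨N₀, fun N hN => ?_⟩
  have hcut := hN₀ N hN
  have hs₀ := seqSc_le_cutoff f N γ 0
  have hs₁ := seqSc_le_cutoff f N γ 1
  have hA := AcountC_le f N γ
  omega

/-- For `0 < γ < 2` and a cutoff function `f` with `f N ≤ N - 1`, `f N → ∞` and
`f N / N → 0`: for all sufficiently large `N`, the cutoff degree-maximizing sequence
satisfies the Erdős–Gallai inequality at `k = 1`, `s_0 + s_1 ≤ 2N - 2 - A_N`; a sublinear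
cutoff removes the graphicality obstruction. -/
theorem cutoff_restores_EG_at_one (γ : ℝ) (h0 : 0 < γ) (h2 : γ < 2)
    (f : ℕ → ℕ)
    (hf1 : ∀ N : ℕ, f N ≤ N - 1)
    (hf2 : Tendsto f atTop atTop)
    (hf3 : Tendsto (fun N : ℕ => (f N : ℝ) / N) atTop (nhds 0)) :
    ∃ N₀ : ℕ, ∀ N : ℕ, N₀ ≤ N →
      (seqSc f N γ 0 : ℤ) + (seqSc f N γ 1 : ℤ) ≤ 2 * (N : ℤ) - 2 - (AcountC f N γ : ℤ) :=
  cutoff_restores_EG_at_one_general γ f hf3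
end
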